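/- Let $K \subset \mathbb{R}^n$ be a bounded Kakeya set with direction set $S \subset S^{n-1}$, $\mathcal{H}^{n-1}(S) > 0$, with segments $L_e \subset K$ for $e \in S$, and let $g \colon K \to (X,d)$ be a map. Suppose $\{B_j^X\}_{j \in \mathbb{N}}$ are sets covering $g(K)$, and $\{B_j\}$ are balls in $\mathbb{R}^n$ with diameters $d_j$ such that $g^{-1}(B_j^X) \subset K \cap QB_j$ and $\mathcal{H}^1(L_e \cap 2QB_j) \geq c\, d_j$ whenever $L_e \cap QB_j \neq \emptyset$. Let $u > 0$ and suppose $\mathcal{H}^u_\infty(g(L_e)) \geq \tau$ for all $e \in S$, where $d_j^X = \operatorname{diam} B_j^X$. Then for every $e \in S$, the function $f = \sum_j \frac{(d_j^X)^u}{d_j}\chi_{2QB_j}$ satisfies $\int_{L_e} f \, d\mathcal{H}^1 \geq c\,\tau$. -/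

import Mathlib

open Set Metric MeasureTheory ENNReal

noncomputable section

/-- The unit line segment from `x` in direction `e`. -/
def seg {n : ℕ} (e x : EuclideanSpace ℝ (Fin n)) : Set (EuclideanSpace ℝ (Fin n)) :=
  (fun t : ℝ => x + t • e) '' Set.Icc (0:ℝ) 1

/-- `u`-dimensional Hausdorff content: infimum of `∑ (diam Eᵢ)^u` over countable covers. -/
def hContent {X : Type*} [EMetricSpace X] (u : ℝ) (A : Set X) : ℝ≥0∞ :=
  ⨅ (E : ℕ → Set X) (_ : A ⊆ ⋃ i, E i), ∑' i, EMetric.diam (E i) ^ u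

/-!
Fix a segment `L ⊆ K`. The indices `j` whose ball `closedBall (x j) (Q * rad j)` meets `L` already
cover `g '' L` by the sets `BX j`, so `τ ≤ ∑_{j} diam (BX j) ^ u` over these `j`. For each such `j`
the length hypothesis makes the `j`-th term of `f` integrate over `L` to at least
`c * diam (BX j) ^ u`; summing, by monotone convergence, gives `c τ`.
-/

lemma hContent_le_tsum {X : Type*} [EMetricSpace X] {u : ℝ} {A : Set X} {E : ℕ → Set X}
    (hA : A ⊆ ⋃ i, E i) : hContent u A ≤ ∑' i, Metric.ediam (E i) ^ u :=
  iInf₂_le E hA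

/-- Sets outside the subfamily `J` are replaced by `∅`, whose diameter vanishes as `0 < u`. -/
lemma hContent_le_tsum_indicator {X : Type*} [EMetricSpace X] {u : ℝ} (hu : 0 < u) {A : Set X}
    {E : ℕ → Set X} {J : Set ℕ} (hA : A ⊆ ⋃ i ∈ J, E i) :
    hContent u A ≤ ∑' i, J.indicator (fun i => Metric.ediam (E i) ^ u) i := by
  classical
  have hcover : A ⊆ ⋃ i, if i ∈ J then E i else ∅ := by
    refine hA.trans (iUnion₂_subset fun i hi => ?_)
    exact subset_iUnion_of_subset i (by simp [hi])
  refine (hContent_le_tsum hcover).trans_eq (tsum_congr fun i => ?_)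
  by_cases hi : i ∈ J
  · simp [hi]
  · simp [hi, ENNReal.zero_rpow_of_pos hu]

lemma image_subset_biUnion_of_preimage_subset {α X ι : Type*} {K L : Set α} {g : α → X}
    {BX : ι → Set X} {B : ι → Set α} (hLK : L ⊆ K) (hcover : g '' K ⊆ ⋃ j, BX j)
    (hpre : ∀ j, K ∩ g ⁻¹' BX j ⊆ B j) :
    g '' L ⊆ ⋃ j ∈ {j | (L ∩ B j).Nonempty}, BX j := by
  rintro _ ⟨z, hz, rfl⟩
  obtain ⟨j, hj⟩ := mem_iUnion.1 (hcover ⟨z, hLK hz, rfl⟩)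
  exact mem_biUnion ⟨z, hz, hpre j ⟨hLK hz, hj⟩⟩ hj

lemma setLIntegral_mul_indicator_one {α : Type*} [MeasurableSpace α] (μ : Measure α)
    (L : Set α) {B : Set α} (hB : MeasurableSet B) (a : ℝ≥0∞) :
    ∫⁻ z in L, a * B.indicator (fun _ => (1 : ℝ≥0∞)) z ∂μ = a * μ (L ∩ B) := by
  rw [lintegral_const_mul _ (measurable_const.indicator hB), lintegral_indicator_const hB,
    one_mul, Measure.restrict_apply hB, inter_comm]

lemma ofReal_mul_le_div_mul {c ℓ : ℝ} (hc : 0 ≤ c) (hℓ : 0 < ℓ) (D : ℝ≥0∞) {m : ℝ≥0∞}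
    (hm : ENNReal.ofReal (c * ℓ) ≤ m) :
    ENNReal.ofReal c * D ≤ D / ENNReal.ofReal ℓ * m :=
  calc ENNReal.ofReal c * D = D / ENNReal.ofReal ℓ * ENNReal.ofReal (c * ℓ) := by
        rw [ENNReal.ofReal_mul hc, mul_left_comm,
          ENNReal.div_mul_cancel (ENNReal.ofReal_pos.2 hℓ).ne' ENNReal.ofReal_ne_top]
    _ ≤ D / ENNReal.ofReal ℓ * m := by gcongr

theorem stmt17_general {n : ℕ} {X : Type*} [MetricSpace X]
    (K : Set (EuclideanSpace ℝ (Fin n)))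
    (S : Set (EuclideanSpace ℝ (Fin n)))
    (y : EuclideanSpace ℝ (Fin n) → EuclideanSpace ℝ (Fin n))
    (hseg : ∀ e ∈ S, seg e (y e) ⊆ K)
    (g : EuclideanSpace ℝ (Fin n) → X)
    (BX : ℕ → Set X) (x : ℕ → EuclideanSpace ℝ (Fin n)) (rad : ℕ → ℝ)
    (hrad : ∀ j, 0 < rad j)
    (Q : ℝ)
    (hcover : g '' K ⊆ ⋃ j, BX j)
    (hpre : ∀ j, K ∩ g ⁻¹' BX j ⊆ Metric.closedBall (x j) (Q * rad j))
    (c : ℝ) (hc : 0 < c)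
    (hlen : ∀ j, ∀ e ∈ S,
      (seg e (y e) ∩ Metric.closedBall (x j) (Q * rad j)).Nonempty →
      ENNReal.ofReal (c * (2 * rad j)) ≤
        μH[1] (seg e (y e) ∩ Metric.closedBall (x j) (2 * Q * rad j)))
    (u : ℝ) (hu : 0 < u) (τ : ℝ)
    (hcont : ∀ e ∈ S, ENNReal.ofReal τ ≤ hContent u (g '' seg e (y e))) :
    ∀ e ∈ S, ENNReal.ofReal (c * τ) ≤
      ∫⁻ z in seg e (y e),
        (∑' j, (EMetric.diam (BX j) ^ u / ENNReal.ofReal (2 * rad j)) *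
          (Metric.closedBall (x j) (2 * Q * rad j)).indicator (fun _ => (1:ℝ≥0∞)) z)
        ∂(μH[1]) := by
  intro e he
  set J := {j | (seg e (y e) ∩ closedBall (x j) (Q * rad j)).Nonempty}
  have hτ : ENNReal.ofReal τ ≤ ∑' j, J.indicator (fun j => Metric.ediam (BX j) ^ u) j :=
    (hcont e he).trans <| hContent_le_tsum_indicator hu <|
      image_subset_biUnion_of_preimage_subset (hseg e he) hcover hpre
  have hterm (j : ℕ) : J.indicator (fun j => ENNReal.ofReal c * Metric.ediam (BX j) ^ u) j ≤
      ∫⁻ z in seg e (y e), (Metric.ediam (BX j) ^ u / ENNReal.ofReal (2 * rad j)) *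
        (closedBall (x j) (2 * Q * rad j)).indicator (fun _ => (1 : ℝ≥0∞)) z ∂μH[1] := by
    refine indicator_apply_le' (fun hj => ?_) fun _ => zero_le
    rw [setLIntegral_mul_indicator_one _ _ measurableSet_closedBall]
    exact ofReal_mul_le_div_mul hc.le (by linarith [hrad j]) _ (hlen j e he hj)
  calc ENNReal.ofReal (c * τ) = ENNReal.ofReal c * ENNReal.ofReal τ := ENNReal.ofReal_mul hc.le
    _ ≤ ENNReal.ofReal c * ∑' j, J.indicator (fun j => Metric.ediam (BX j) ^ u) j := by gcongr
    _ = ∑' j, J.indicator (fun j => ENNReal.ofReal c * Metric.ediam (BX j) ^ u) j := by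
      simp only [← ENNReal.tsum_mul_left, indicator_mul_right]
    _ ≤ _ := ENNReal.tsum_le_tsum hterm
    _ = _ := (lintegral_tsum fun j =>
      ((measurable_const.indicator measurableSet_closedBall).const_mul _).aemeasurable).symm

/-- The admissibility estimate: the Riesz-type function built from the covering data has
line integral at least `c τ` over every segment of the Kakeya set. -/
theorem stmt17 {n : ℕ} {X : Type*} [MetricSpace X]
    (K : Set (EuclideanSpace ℝ (Fin n)))
    (S : Set (EuclideanSpace ℝ (Fin n)))
    (hS : S ⊆ Metric.sphere (0 : EuclideanSpace ℝ (Fin n)) 1)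
    (hSpos : 0 < μH[((n : ℝ) - 1)] S)
    (y : EuclideanSpace ℝ (Fin n) → EuclideanSpace ℝ (Fin n))
    (hseg : ∀ e ∈ S, seg e (y e) ⊆ K)
    (g : EuclideanSpace ℝ (Fin n) → X)
    (BX : ℕ → Set X) (x : ℕ → EuclideanSpace ℝ (Fin n)) (rad : ℕ → ℝ)
    (hrad : ∀ j, 0 < rad j)
    (Q : ℝ) (hQ : 1 ≤ Q)
    (hcover : g '' K ⊆ ⋃ j, BX j)
    (hpre : ∀ j, K ∩ g ⁻¹' BX j ⊆ Metric.closedBall (x j) (Q * rad j))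
    (c : ℝ) (hc : 0 < c)
    (hlen : ∀ j, ∀ e ∈ S,
      (seg e (y e) ∩ Metric.closedBall (x j) (Q * rad j)).Nonempty →
      ENNReal.ofReal (c * (2 * rad j)) ≤
        μH[1] (seg e (y e) ∩ Metric.closedBall (x j) (2 * Q * rad j)))
    (u : ℝ) (hu : 0 < u) (τ : ℝ) (hτ : 0 < τ)
    (hcont : ∀ e ∈ S, ENNReal.ofReal τ ≤ hContent u (g '' seg e (y e))) :
    ∀ e ∈ S, ENNReal.ofReal (c * τ) ≤
      ∫⁻ z in seg e (y e),
        (∑' j, (EMetric.diam (BX j) ^ u / ENNReal.ofReal (2 * rad j)) *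
          (Metric.closedBall (x j) (2 * Q * rad j)).indicator (fun _ => (1:ℝ≥0∞)) z)
        ∂(μH[1]) :=
  stmt17_general K S y hseg g BX x rad hrad Q hcover hpre c hc hlen u hu τ hcont
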